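/- The universe size number of the complete bipartite graph K_{s,t} equals (1 + ⌈log₂ s⌉) + (1 + ⌈log₂ t⌉) for s, t ≥ 2. -/

import Mathlib

/-!
In a disjointness labelling of `K_{s,t}` every left label is disjoint from every right label, so
the left labels live in a set `A` and the right labels in a set `B` disjoint from it. The left
labels are distinct and pairwise intersecting, and an intersecting family of subsets of `A` has at
most `2 ^ (|A| - 1)` members, since it never contains both a set and its complement in `A`; hence
`|A| ≥ 1 + ⌈log₂ s⌉`, and likewise for `B`. Conversely, labelling the left vertices by distinct
subsets of `⌈log₂ s⌉` points together with one extra common point, and the right vertices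
likewise on a disjoint set of points, gives a labelling of that size.
-/

/-- A disjointness labelling of `G`: an injective assignment of nonempty
finite subsets of the universe `U` to vertices, such that two distinct
vertices are adjacent iff their labels are disjoint. -/
def IsDisjLabelling {V U : Type*} (G : SimpleGraph V) (ℓ : V → Finset U) : Prop :=
  Function.Injective ℓ ∧ (∀ v, (ℓ v).Nonempty) ∧
    ∀ u v : V, u ≠ v → (G.Adj u v ↔ Disjoint (ℓ u) (ℓ v))

/-- The universe size number: the minimum size of a universe admitting a
disjointness labelling of `G`. -/
noncomputable def USN {V : Type*} (G : SimpleGraph V) : ℕ :=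
  sInf {m : ℕ | ∃ ℓ : V → Finset (Fin m), IsDisjLabelling G ℓ}

open Finset Function

theorem Nat.clog_mul_base {b n : ℕ} (hb : 1 < b) (hn : n ≠ 0) :
    Nat.clog b (b * n) = Nat.clog b n + 1 := by
  rw [Nat.clog_of_one_lt hb (hb.trans_le (Nat.le_mul_of_pos_right b (Nat.pos_of_ne_zero hn))),
    Nat.add_sub_assoc hb.le, Nat.mul_add_div (by omega), Nat.div_eq_of_lt (by omega), add_zero]

theorem Set.Intersecting.two_mul_card_le_two_pow {α : Type*} [DecidableEq α]
    {𝒜 : Finset (Finset α)} (h𝒜 : (𝒜 : Set (Finset α)).Intersecting) {A : Finset α}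
    (h𝒜A : ∀ s ∈ 𝒜, s ⊆ A) : 2 * #𝒜 ≤ 2 ^ #A := by
  have hinj : Set.InjOn (A \ ·) 𝒜 := fun s hs t ht hst => by
    rw [← Finset.sdiff_sdiff_eq_self (h𝒜A s hs), ← Finset.sdiff_sdiff_eq_self (h𝒜A t ht)]
    exact congrArg (A \ ·) hst
  have hdisj : Disjoint 𝒜 (𝒜.image (A \ ·)) := Finset.disjoint_left.2 fun s hs hs' => by
    obtain ⟨t, ht, rfl⟩ := Finset.mem_image.1 hs'
    exact h𝒜 hs ht sdiff_disjoint
  calc 2 * #𝒜 = #(𝒜 ∪ 𝒜.image (A \ ·)) := by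
        rw [Finset.card_union_of_disjoint hdisj, Finset.card_image_of_injOn hinj, two_mul]
    _ ≤ #A.powerset := Finset.card_le_card <|
        Finset.union_subset (fun s hs => Finset.mem_powerset.2 (h𝒜A s hs))
        (Finset.forall_mem_image.2 fun _ _ => Finset.mem_powerset.2 Finset.sdiff_subset)
    _ = 2 ^ #A := Finset.card_powerset A

namespace IsDisjLabelling

variable {V U W : Type*} {G : SimpleGraph V} {ℓ : V → Finset U}

theorem disjoint_iff (h : IsDisjLabelling G ℓ) (u v : V) :
    Disjoint (ℓ u) (ℓ v) ↔ G.Adj u v := by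
  rcases eq_or_ne u v with rfl | huv
  · simpa using (h.2.1 u).ne_empty
  · exact (h.2.2 u v huv).symm

theorem of_disjoint_iff (hinj : Injective ℓ)
    (hadj : ∀ u v, Disjoint (ℓ u) (ℓ v) ↔ G.Adj u v) :
    IsDisjLabelling G ℓ :=
  ⟨hinj, fun v => nonempty_iff_ne_empty.2 fun hv => G.irrefl ((hadj v v).1 (by simp [hv])),
    fun u v _ => (hadj u v).symm⟩

theorem map (h : IsDisjLabelling G ℓ) (e : U ↪ W) : IsDisjLabelling G fun v => (ℓ v).map e :=
  of_disjoint_iff (fun _ _ huv => h.1 (map_injective e huv)) fun u v => by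
    rw [disjoint_map, h.disjoint_iff]

theorem USN_le [Fintype U] (h : IsDisjLabelling G ℓ) : USN G ≤ Fintype.card U :=
  Nat.sInf_le ⟨_, h.map (Fintype.equivFin U).toEmbedding⟩

theorem intersecting_image [DecidableEq U] (h : IsDisjLabelling G ℓ) {S : Finset V}
    (hS : G.IsIndepSet S) : ((S.image ℓ : Finset (Finset U)) : Set (Finset U)).Intersecting := by
  rw [coe_image]
  rintro _ ⟨u, hu, rfl⟩ _ ⟨v, hv, rfl⟩
  rw [h.disjoint_iff]
  rcases eq_or_ne u v with rfl | huv
  · exact G.irrefl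
  · exact hS hu hv huv

theorem clog_card_add_one_le [DecidableEq U] (h : IsDisjLabelling G ℓ) {S : Finset V}
    (hS : G.IsIndepSet S) (hne : S.Nonempty) : Nat.clog 2 #S + 1 ≤ #(S.biUnion ℓ) := by
  have hcount := (h.intersecting_image hS).two_mul_card_le_two_pow
    (forall_mem_image.2 fun _ hv => subset_biUnion_of_mem ℓ hv)
  rw [card_image_of_injective S h.1] at hcount
  rw [← Nat.clog_mul_base one_lt_two hne.card_pos.ne']
  exact Nat.clog_le_of_le_pow hcount

theorem clog_add_clog_le_card {α β : Type*} [Fintype α] [Fintype β] [Nonempty α] [Nonempty β]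
    [Fintype U] [DecidableEq U] {ℓ : α ⊕ β → Finset U}
    (h : IsDisjLabelling (completeBipartiteGraph α β) ℓ) :
    (Nat.clog 2 (Fintype.card α) + 1) + (Nat.clog 2 (Fintype.card β) + 1) ≤ Fintype.card U := by
  set A := (univ.map .inl).biUnion ℓ
  set B := (univ.map .inr).biUnion ℓ
  have hA : Nat.clog 2 (Fintype.card α) + 1 ≤ #A := by
    simpa using h.clog_card_add_one_le (S := univ.map .inl)
      (by simp [SimpleGraph.IsIndepSet, Set.Pairwise]) univ_nonempty.map
  have hB : Nat.clog 2 (Fintype.card β) + 1 ≤ #B := by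
    simpa using h.clog_card_add_one_le (S := univ.map .inr)
      (by simp [SimpleGraph.IsIndepSet, Set.Pairwise]) univ_nonempty.map
  have hAB : Disjoint A B := by
    simp only [A, B, disjoint_biUnion_left, disjoint_biUnion_right, forall_mem_map]
    exact fun i _ j _ => (h.disjoint_iff _ _).2 (by simp)
  calc _ ≤ #A + #B := add_le_add hA hB
    _ = #(A ∪ B) := (card_union_of_disjoint hAB).symm
    _ ≤ Fintype.card U := card_le_univ _

end IsDisjLabelling

theorem le_USN {V : Type*} {G : SimpleGraph V} {n : ℕ}
    (hG : ∃ m, ∃ ℓ : V → Finset (Fin m), IsDisjLabelling G ℓ)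
    (h : ∀ m (ℓ : V → Finset (Fin m)), IsDisjLabelling G ℓ → n ≤ m) : n ≤ USN G :=
  le_csInf hG fun m ⟨ℓ, hℓ⟩ => h m ℓ hℓ

theorem exists_injective_forall_not_disjoint (α : Type*) [Fintype α] :
    ∃ f : α → Finset (Option (Fin (Nat.clog 2 (Fintype.card α)))),
      Injective f ∧ ∀ i j, ¬Disjoint (f i) (f j) := by
  obtain ⟨e⟩ : Nonempty (α ↪ Finset (Fin (Nat.clog 2 (Fintype.card α)))) :=
    Embedding.nonempty_of_card_le (by simpa using Nat.le_pow_clog one_lt_two _)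
  exact ⟨fun i => insertNone (e i), insertNone.injective.comp e.injective,
    fun _ _ => not_disjoint_iff.2 ⟨none, none_mem_insertNone, none_mem_insertNone⟩⟩

theorem isDisjLabelling_completeBipartiteGraph_sumElim {α β X Y : Type*}
    {f : α → Finset X} {g : β → Finset Y} (hf : Injective f) (hg : Injective g)
    (hf' : ∀ i j, ¬Disjoint (f i) (f j)) (hg' : ∀ i j, ¬Disjoint (g i) (g j)) :
    IsDisjLabelling (completeBipartiteGraph α β)
      (Sum.elim (fun i => (f i).map .inl) fun j => (g j).map .inr) := by
  refine .of_disjoint_iff ?_ ?_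
  · refine (map_injective _ |>.comp hf).sumElim (map_injective _ |>.comp hg) fun i j hij => ?_
    have hdisj := disjoint_map_inl_map_inr (f i) (g j)
    rw [← hij, comp_apply, disjoint_map] at hdisj
    exact hf' i i hdisj
  · rintro (i | j) (i' | j') <;>
      simp [disjoint_map, hf', hg', disjoint_map_inl_map_inr, (disjoint_map_inl_map_inr _ _).symm]

theorem USN_completeBipartiteGraph {α β : Type*} [Fintype α] [Fintype β] [Nonempty α]
    [Nonempty β] : USN (completeBipartiteGraph α β) =
      (Nat.clog 2 (Fintype.card α) + 1) + (Nat.clog 2 (Fintype.card β) + 1) := by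
  obtain ⟨f, hf, hf'⟩ := exists_injective_forall_not_disjoint α
  obtain ⟨g, hg, hg'⟩ := exists_injective_forall_not_disjoint β
  have hℓ := isDisjLabelling_completeBipartiteGraph_sumElim hf hg hf' hg'
  refine le_antisymm (by simpa using hℓ.USN_le) (le_USN ?_ fun m _ h => ?_)
  · exact ⟨_, _, hℓ.map (Fintype.equivFin _).toEmbedding⟩
  · simpa using h.clog_add_clog_le_card

/-- `USN (K_{s,t}) = (1 + ⌈log₂ s⌉) + (1 + ⌈log₂ t⌉)` for `s, t ≥ 2`. -/
theorem stmt8 (s t : ℕ) (hs : 2 ≤ s) (ht : 2 ≤ t) :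
    USN (completeBipartiteGraph (Fin s) (Fin t)) =
      (1 + Nat.clog 2 s) + (1 + Nat.clog 2 t) := by
  have : Nonempty (Fin s) := Fin.pos_iff_nonempty.1 (by omega)
  have : Nonempty (Fin t) := Fin.pos_iff_nonempty.1 (by omega)
  rw [USN_completeBipartiteGraph, Fintype.card_fin, Fintype.card_fin]
  omega
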